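/- Let C(u_1,u_2) = ∑_{h_1=0}^{l_1} ∑_{h_2=0}^{l_2} η_{h_1,h_2} P_{l_1,h_1}(u_1) P_{l_2,h_2}(u_2) with marginals F_1(u_1) = C(u_1,1) = ∑_{h_1} η_{h_1,l_2} P_{l_1,h_1}(u_1) and F_2(u_2) = C(1,u_2) = ∑_{h_2} η_{l_1,h_2} P_{l_2,h_2}(u_2). Then the Spearman functional 12 ∫_0^1 ∫_0^1 (C(u_1,u_2) − F_1(u_1)F_2(u_2)) dF_1(u_1) dF_2(u_2) equals 12 ∑_{h_1=0}^{l_1} ∑_{h_2=0}^{l_2} ∑_{g_1=0}^{l_1−1} ∑_{g_2=0}^{l_2−1} (η_{h_1,h_2} − η_{h_1,l_2} η_{l_1,h_2})(η_{g_1+1,l_2} − η_{g_1,l_2})(η_{l_1,g_2+1} − η_{l_1,g_2}) ∏_{s=1}^2 l_s C(l_s,h_s) C(l_s−1,g_s) B(h_s+g_s+1, 2l_s−h_s−g_s). -/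

import Mathlib

/-- Bernstein basis polynomial `P_{l,h}(u) = C(l,h) u^h (1-u)^{l-h}`. -/
noncomputable def bern (l h : ℕ) (u : ℝ) : ℝ := (l.choose h : ℝ) * u ^ h * (1 - u) ^ (l - h)

/-- The Beta function `B(a,b) = ∫_0^1 t^(a-1) (1-t)^(b-1) dt`. -/
noncomputable def betaFn (a b : ℝ) : ℝ := ∫ t in (0:ℝ)..1, t ^ (a - 1) * (1 - t) ^ (b - 1)

/-- A bivariate polynomial in Bernstein form. -/
noncomputable def bernForm (l₁ l₂ : ℕ) (η : ℕ → ℕ → ℝ) (u₁ u₂ : ℝ) : ℝ :=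
  ∑ h₁ ∈ Finset.range (l₁ + 1), ∑ h₂ ∈ Finset.range (l₂ + 1),
    η h₁ h₂ * bern l₁ h₁ u₁ * bern l₂ h₂ u₂


/-!
Since `P_{l,h}(1) = δ_{hl}`, the marginals are univariate Bernstein forms and `C − F₁F₂` is again
a bivariate Bernstein form, with coefficients `η_{h₁h₂} − η_{h₁l₂} η_{l₁h₂}`. The derivative of a
Bernstein form of degree `l` is `l` times the Bernstein form of degree `l − 1` of the forward
differences of its coefficients. The integrand therefore splits into a finite sum of products
`φ(u₁) ψ(u₂)`, and each factor is a Beta integral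
`∫₀¹ P_{l,h} P_{l-1,g} = C(l,h) C(l-1,g) B(h+g+1, 2l-h-g)`.
-/

open Finset Polynomial MeasureTheory

theorem derivative_sum_C_mul_bernsteinPolynomial {R : Type*} [CommRing R] (n : ℕ) (a : ℕ → R) :
    derivative (∑ ν ∈ range (n + 1), C (a ν) * bernsteinPolynomial R n ν) =
      n * ∑ ν ∈ range n, C (a (ν + 1) - a ν) * bernsteinPolynomial R (n - 1) ν := by
  rcases n with _ | m
  · simp [bernsteinPolynomial]
  -- Summation by parts; the boundary term vanishes because `bernsteinPolynomial R m (m + 1) = 0`.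
  have hshift := Finset.sum_range_succ' (fun ν => C (a ν) * bernsteinPolynomial R m ν) (m + 1)
  rw [Finset.sum_range_succ, bernsteinPolynomial.eq_zero_of_lt R (Nat.lt_succ_self m)] at hshift
  rw [Finset.sum_range_succ']
  simp only [derivative_add, derivative_sum, derivative_C_mul, bernsteinPolynomial.derivative_succ,
    bernsteinPolynomial.derivative_zero, Nat.add_sub_cancel, C_sub, sub_mul, mul_sub,
    Finset.sum_sub_distrib, ← Finset.mul_sum, mul_left_comm (C _)]
  linear_combination (↑(m + 1) : R[X]) * hshift

theorem bern_eq_eval (l h : ℕ) (u : ℝ) : bern l h u = (bernsteinPolynomial ℝ l h).eval u := by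
  simp [bern, bernsteinPolynomial]

@[fun_prop]
theorem continuous_bern (l h : ℕ) : Continuous (bern l h) := by
  simp_rw [funext (bern_eq_eval l h)]; exact Polynomial.continuous _

theorem bern_one (l h : ℕ) : bern l h 1 = if h = l then 1 else 0 := by
  rw [bern_eq_eval, bernsteinPolynomial.eval_at_1]

theorem deriv_sum_mul_bern (l : ℕ) (a : ℕ → ℝ) (u : ℝ) :
    deriv (fun x => ∑ h ∈ range (l + 1), a h * bern l h x) u =
      l * ∑ g ∈ range l, (a (g + 1) - a g) * bern (l - 1) g u := by
  have hpoly : (fun x => ∑ h ∈ range (l + 1), a h * bern l h x) =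
      fun x => (∑ h ∈ range (l + 1), C (a h) * bernsteinPolynomial ℝ l h).eval x := by
    funext x; simp [eval_finsetSum, bern_eq_eval]
  rw [hpoly, Polynomial.deriv, derivative_sum_C_mul_bernsteinPolynomial]
  simp [eval_finsetSum, bern_eq_eval]

theorem betaFn_natCast_add_one (p q : ℕ) :
    betaFn ((p : ℝ) + 1) ((q : ℝ) + 1) = ∫ t in (0:ℝ)..1, t ^ p * (1 - t) ^ q := by
  simp only [betaFn, add_sub_cancel_right, Real.rpow_natCast]

theorem integral_bern_mul_bern {l h m g : ℕ} (hh : h ≤ l) (hg : g ≤ m) :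
    ∫ u in (0:ℝ)..1, bern l h u * bern m g u =
      l.choose h * m.choose g * betaFn (h + g + 1) (l + m - h - g + 1) := by
  have hcast : (l + m - h - g : ℝ) = ((l - h + (m - g) : ℕ) : ℝ) := by
    push_cast [Nat.cast_sub hh, Nat.cast_sub hg]; ring
  rw [hcast, ← Nat.cast_add, betaFn_natCast_add_one, ← intervalIntegral.integral_const_mul]
  refine intervalIntegral.integral_congr fun u _ => ?_
  simp only [bern, pow_add]
  ring

theorem bernForm_one_right (l₁ l₂ : ℕ) (η : ℕ → ℕ → ℝ) (u : ℝ) :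
    bernForm l₁ l₂ η u 1 = ∑ h ∈ range (l₁ + 1), η h l₂ * bern l₁ h u := by
  simp [bernForm, bern_one, Finset.sum_ite_eq']

theorem bernForm_one_left (l₁ l₂ : ℕ) (η : ℕ → ℕ → ℝ) (u : ℝ) :
    bernForm l₁ l₂ η 1 u = ∑ h ∈ range (l₂ + 1), η l₁ h * bern l₂ h u := by
  simp [bernForm, bern_one, Finset.sum_ite_eq', mul_comm]

theorem bernForm_sub_mul (l₁ l₂ : ℕ) (η : ℕ → ℕ → ℝ) (u₁ u₂ : ℝ) :
    bernForm l₁ l₂ η u₁ u₂ - bernForm l₁ l₂ η u₁ 1 * bernForm l₁ l₂ η 1 u₂ =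
      bernForm l₁ l₂ (fun h₁ h₂ => η h₁ h₂ - η h₁ l₂ * η l₁ h₂) u₁ u₂ := by
  rw [bernForm_one_right, bernForm_one_left, Finset.sum_mul_sum]
  simp only [bernForm, ← Finset.sum_sub_distrib]
  exact Finset.sum_congr rfl fun _ _ => Finset.sum_congr rfl fun _ _ => by ring

theorem intervalIntegral_integral_sum_sum_mul {ι κ : Type*} (s : Finset ι) (t : Finset κ)
    (c : ι → κ → ℝ) {f : ι → ℝ → ℝ} {g : κ → ℝ → ℝ} {a₁ b₁ a₂ b₂ : ℝ}
    (hf : ∀ i ∈ s, IntervalIntegrable (f i) volume a₁ b₁)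
    (hg : ∀ j ∈ t, IntervalIntegrable (g j) volume a₂ b₂) :
    ∫ y in a₂..b₂, ∫ x in a₁..b₁, ∑ i ∈ s, ∑ j ∈ t, c i j * f i x * g j y =
      ∑ i ∈ s, ∑ j ∈ t, c i j * (∫ x in a₁..b₁, f i x) * ∫ y in a₂..b₂, g j y := by
  simp only [← Finset.sum_product']
  have inner : ∀ y, ∫ x in a₁..b₁, ∑ p ∈ s ×ˢ t, c p.1 p.2 * f p.1 x * g p.2 y =
      ∑ p ∈ s ×ˢ t, c p.1 p.2 * (∫ x in a₁..b₁, f p.1 x) * g p.2 y := fun y => by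
    rw [intervalIntegral.integral_finsetSum fun p hp =>
      ((hf p.1 (Finset.mem_product.1 hp).1).const_mul _).mul_const _]
    simp only [intervalIntegral.integral_mul_const, intervalIntegral.integral_const_mul]
  simp only [inner]
  rw [intervalIntegral.integral_finsetSum fun p hp =>
    (hg p.2 (Finset.mem_product.1 hp).2).const_mul _]
  simp only [intervalIntegral.integral_const_mul]

theorem integral_bern_mul_deriv_sum_mul_bern {l h : ℕ} (hh : h ≤ l) (a : ℕ → ℝ) :
    ∫ u in (0:ℝ)..1, bern l h u * deriv (fun x => ∑ k ∈ range (l + 1), a k * bern l k x) u =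
      ∑ g ∈ range l, (a (g + 1) - a g) *
        (l * l.choose h * (l - 1).choose g * betaFn (h + g + 1) (2 * l - h - g)) := by
  simp only [deriv_sum_mul_bern, Finset.mul_sum]
  rw [intervalIntegral.integral_finsetSum fun g _ => by
    apply Continuous.intervalIntegrable; fun_prop]
  refine Finset.sum_congr rfl fun g hg => ?_
  have hgl : g < l := Finset.mem_range.1 hg
  have hcast : (l + (l - 1 : ℕ) - h - g + 1 : ℝ) = 2 * l - h - g := by
    rw [Nat.cast_sub (by omega)]; ring
  calc ∫ u in (0:ℝ)..1, bern l h u * (l * ((a (g + 1) - a g) * bern (l - 1) g u))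
      = (a (g + 1) - a g) * l * ∫ u in (0:ℝ)..1, bern l h u * bern (l - 1) g u := by
        rw [← intervalIntegral.integral_const_mul]
        exact intervalIntegral.integral_congr fun u _ => by ring
    _ = _ := by rw [integral_bern_mul_bern hh (by omega), hcast]; ring

@[fun_prop]
theorem continuous_deriv_sum_mul_bern (l : ℕ) (a : ℕ → ℝ) :
    Continuous (deriv fun x => ∑ h ∈ range (l + 1), a h * bern l h x) := by
  rw [show deriv _ = _ from funext (deriv_sum_mul_bern l a)]
  fun_prop

theorem spearman_integrand_eq_sum (l₁ l₂ : ℕ) (η : ℕ → ℕ → ℝ) (u₁ u₂ : ℝ) :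
    (bernForm l₁ l₂ η u₁ u₂ - bernForm l₁ l₂ η u₁ 1 * bernForm l₁ l₂ η 1 u₂) *
        deriv (fun a => bernForm l₁ l₂ η a 1) u₁ * deriv (fun b => bernForm l₁ l₂ η 1 b) u₂ =
      ∑ h₁ ∈ range (l₁ + 1), ∑ h₂ ∈ range (l₂ + 1), (η h₁ h₂ - η h₁ l₂ * η l₁ h₂) *
        (bern l₁ h₁ u₁ * deriv (fun a => ∑ h ∈ range (l₁ + 1), η h l₂ * bern l₁ h a) u₁) *
        (bern l₂ h₂ u₂ * deriv (fun b => ∑ h ∈ range (l₂ + 1), η l₁ h * bern l₂ h b) u₂) := by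
  rw [bernForm_sub_mul, funext (bernForm_one_right l₁ l₂ η), funext (bernForm_one_left l₁ l₂ η),
    bernForm, Finset.sum_mul, Finset.sum_mul]
  refine Finset.sum_congr rfl fun h₁ _ => ?_
  rw [Finset.sum_mul, Finset.sum_mul]
  exact Finset.sum_congr rfl fun h₂ _ => by ring

theorem spearman_functional_closed_form_general (l₁ l₂ : ℕ) (η : ℕ → ℕ → ℝ) :
    12 * (∫ u₂ in (0:ℝ)..1, ∫ u₁ in (0:ℝ)..1,
        (bernForm l₁ l₂ η u₁ u₂ - bernForm l₁ l₂ η u₁ 1 * bernForm l₁ l₂ η 1 u₂) *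
          deriv (fun a => bernForm l₁ l₂ η a 1) u₁ *
          deriv (fun b => bernForm l₁ l₂ η 1 b) u₂) =
      12 * ∑ h₁ ∈ Finset.range (l₁ + 1), ∑ h₂ ∈ Finset.range (l₂ + 1),
        ∑ g₁ ∈ Finset.range l₁, ∑ g₂ ∈ Finset.range l₂,
          (η h₁ h₂ - η h₁ l₂ * η l₁ h₂) *
            (η (g₁ + 1) l₂ - η g₁ l₂) * (η l₁ (g₂ + 1) - η l₁ g₂) *
            ((l₁ : ℝ) * (l₁.choose h₁ : ℝ) * ((l₁ - 1).choose g₁ : ℝ) *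
              betaFn (h₁ + g₁ + 1) (2 * l₁ - h₁ - g₁)) *
            ((l₂ : ℝ) * (l₂.choose h₂ : ℝ) * ((l₂ - 1).choose g₂ : ℝ) *
              betaFn (h₂ + g₂ + 1) (2 * l₂ - h₂ - g₂)) := by
  simp_rw [spearman_integrand_eq_sum]
  rw [intervalIntegral_integral_sum_sum_mul _ _ _
    (fun _ _ => (by fun_prop : Continuous _).intervalIntegrable _ _)
    (fun _ _ => (by fun_prop : Continuous _).intervalIntegrable _ _)]
  congr 1
  refine Finset.sum_congr rfl fun h₁ hh₁ => Finset.sum_congr rfl fun h₂ hh₂ => ?_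
  rw [integral_bern_mul_deriv_sum_mul_bern (Nat.lt_succ_iff.1 (Finset.mem_range.1 hh₁)),
    integral_bern_mul_deriv_sum_mul_bern (Nat.lt_succ_iff.1 (Finset.mem_range.1 hh₂)),
    Finset.mul_sum (range l₁), Finset.sum_mul]
  refine Finset.sum_congr rfl fun g₁ _ => ?_
  rw [Finset.mul_sum]
  exact Finset.sum_congr rfl fun g₂ _ => by ring

/-- Closed-form expression for the Spearman functional
`12 ∫∫ (C(u₁,u₂) − F₁(u₁)F₂(u₂)) dF₁(u₁) dF₂(u₂)` of a bivariate Bernstein-form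
polynomial, where `F₁(u₁) = C(u₁,1)` and `F₂(u₂) = C(1,u₂)` and `dFₛ` means
integration against the derivative of `Fₛ`. -/
theorem spearman_functional_closed_form (l₁ l₂ : ℕ) (hl₁ : 1 ≤ l₁) (hl₂ : 1 ≤ l₂)
    (η : ℕ → ℕ → ℝ) :
    12 * (∫ u₂ in (0:ℝ)..1, ∫ u₁ in (0:ℝ)..1,
        (bernForm l₁ l₂ η u₁ u₂ - bernForm l₁ l₂ η u₁ 1 * bernForm l₁ l₂ η 1 u₂) *
          deriv (fun a => bernForm l₁ l₂ η a 1) u₁ *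
          deriv (fun b => bernForm l₁ l₂ η 1 b) u₂) =
      12 * ∑ h₁ ∈ Finset.range (l₁ + 1), ∑ h₂ ∈ Finset.range (l₂ + 1),
        ∑ g₁ ∈ Finset.range l₁, ∑ g₂ ∈ Finset.range l₂,
          (η h₁ h₂ - η h₁ l₂ * η l₁ h₂) *
            (η (g₁ + 1) l₂ - η g₁ l₂) * (η l₁ (g₂ + 1) - η l₁ g₂) *
            ((l₁ : ℝ) * (l₁.choose h₁ : ℝ) * ((l₁ - 1).choose g₁ : ℝ) *
              betaFn (h₁ + g₁ + 1) (2 * l₁ - h₁ - g₁)) *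
            ((l₂ : ℝ) * (l₂.choose h₂ : ℝ) * ((l₂ - 1).choose g₂ : ℝ) *
              betaFn (h₂ + g₂ + 1) (2 * l₂ - h₂ - g₂)) :=
  spearman_functional_closed_form_general l₁ l₂ η
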